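/- arXiv:1510.00475 — 2 statements merged into one kernel-verified Lean document; each statement's English description precedes it below -/
import Mathlib

section
/- Let z₁, z₂, z₃ be nonzero vectors in a real inner product space with z₁ + z₂ + z₃ = 0, and define b_j = ‖z_j‖² / (‖z₁‖² + ‖z₂‖² + ‖z₃‖²) for j = 1,2,3. Then b₁² + b₂² + b₃² = (2 + 4(‖z₁‖²‖z₂‖² − ⟨z₁,z₂⟩²)/(‖z₁‖⁴ + ‖z₂‖⁴ + ‖z₃‖⁴))⁻¹. -/
/-! The squared norms `a, c, d` of `z₁, z₂, z₃ = -(z₁ + z₂)` are the squared side lengths of a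
triangle, so by Heron's formula four times the Gram determinant is `2(ac + cd + da) - (a² + c² + d²)`.
Hence the bracket equals `(a + c + d)² / (a² + c² + d²)`, the reciprocal of `∑ bⱼ²`. -/

theorem four_mul_gram_eq_heron {E : Type*} [NormedAddCommGroup E] [InnerProductSpace ℝ E]
    (x y : E) :
    4 * (‖x‖ ^ 2 * ‖y‖ ^ 2 - inner ℝ x y ^ 2)
      = 2 * (‖x‖ ^ 2 * ‖y‖ ^ 2 + ‖y‖ ^ 2 * ‖x + y‖ ^ 2 + ‖x + y‖ ^ 2 * ‖x‖ ^ 2)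
        - (‖x‖ ^ 4 + ‖y‖ ^ 4 + ‖x + y‖ ^ 4) := by
  rw [show ‖x + y‖ ^ 4 = (‖x + y‖ ^ 2) ^ 2 by ring, norm_add_sq_real]
  ring

theorem sum_sq_div_sum_sq_eq_inv {K : Type*} [Field K] (x y z : K)
    (h : x ^ 4 + y ^ 4 + z ^ 4 ≠ 0) :
    (x ^ 2 / (x ^ 2 + y ^ 2 + z ^ 2)) ^ 2 + (y ^ 2 / (x ^ 2 + y ^ 2 + z ^ 2)) ^ 2
        + (z ^ 2 / (x ^ 2 + y ^ 2 + z ^ 2)) ^ 2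
      = (2 + (2 * (x ^ 2 * y ^ 2 + y ^ 2 * z ^ 2 + z ^ 2 * x ^ 2) - (x ^ 4 + y ^ 4 + z ^ 4))
          / (x ^ 4 + y ^ 4 + z ^ 4))⁻¹ := by
  have key : 2 + (2 * (x ^ 2 * y ^ 2 + y ^ 2 * z ^ 2 + z ^ 2 * x ^ 2) - (x ^ 4 + y ^ 4 + z ^ 4))
      / (x ^ 4 + y ^ 4 + z ^ 4) = (x ^ 2 + y ^ 2 + z ^ 2) ^ 2 / (x ^ 4 + y ^ 4 + z ^ 4) := by
    field_simp
    ring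
  rw [key, inv_div, div_pow, div_pow, div_pow, ← add_div, ← add_div]
  ring

theorem stmt3_general {E : Type*} [NormedAddCommGroup E] [InnerProductSpace ℝ E]
    (z₁ z₂ z₃ : E) (h1 : z₁ ≠ 0)
    (h : z₁ + z₂ + z₃ = 0)
    (b : Fin 3 → ℝ)
    (hb : ∀ j, b j = ‖![z₁, z₂, z₃] j‖ ^ 2 / (‖z₁‖ ^ 2 + ‖z₂‖ ^ 2 + ‖z₃‖ ^ 2)) :
    b 0 ^ 2 + b 1 ^ 2 + b 2 ^ 2
      = (2 + 4 * (‖z₁‖ ^ 2 * ‖z₂‖ ^ 2 - (inner ℝ z₁ z₂ : ℝ) ^ 2)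
            / (‖z₁‖ ^ 4 + ‖z₂‖ ^ 4 + ‖z₃‖ ^ 4))⁻¹ := by
  have hz₃ : ‖z₃‖ = ‖z₁ + z₂‖ := by
    rw [eq_neg_of_add_eq_zero_right h, norm_neg]
  have hS : ‖z₁‖ ^ 4 + ‖z₂‖ ^ 4 + ‖z₃‖ ^ 4 ≠ 0 := by
    have : 0 < ‖z₁‖ := norm_pos_iff.mpr h1
    positivity
  rw [four_mul_gram_eq_heron, ← hz₃, ← sum_sq_div_sum_sq_eq_inv _ _ _ hS, hb, hb, hb]
  rfl

theorem stmt3 {E : Type*} [NormedAddCommGroup E] [InnerProductSpace ℝ E]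
    (z₁ z₂ z₃ : E) (h1 : z₁ ≠ 0) (h2 : z₂ ≠ 0) (h3 : z₃ ≠ 0)
    (h : z₁ + z₂ + z₃ = 0)
    (b : Fin 3 → ℝ)
    (hb : ∀ j, b j = ‖![z₁, z₂, z₃] j‖ ^ 2 / (‖z₁‖ ^ 2 + ‖z₂‖ ^ 2 + ‖z₃‖ ^ 2)) :
    b 0 ^ 2 + b 1 ^ 2 + b 2 ^ 2
      = (2 + 4 * (‖z₁‖ ^ 2 * ‖z₂‖ ^ 2 - (inner ℝ z₁ z₂ : ℝ) ^ 2)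
            / (‖z₁‖ ^ 4 + ‖z₂‖ ^ 4 + ‖z₃‖ ^ 4))⁻¹ :=
  stmt3_general z₁ z₂ z₃ h1 h b hb
end

section
/- Let z₁, z₂, z₃ be nonzero vectors in a real inner product space with z₁ + z₂ + z₃ = 0, and suppose z₁ and z₂ are linearly independent. Define b_j = ‖z_j‖²/(‖z₁‖²+‖z₂‖²+‖z₃‖²). Then b₁² + b₂² + b₃² < 1/2. -/
/-!
Put `a = ‖z₁‖²`, `b = ‖z₂‖²`, `c = ‖z₃‖² = ‖z₁ + z₂‖²`. Expanding `c` gives Heron's identity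
`2(ab + bc + ca) - (a² + b² + c²) = 4(‖z₁‖²‖z₂‖² - ⟪z₁, z₂⟫²)`, and the right side is four times the
Gram determinant of `z₁, z₂`, positive by independence. As
`(a + b + c)² = a² + b² + c² + 2(ab + bc + ca)`, this says `2(a² + b² + c²) < (a + b + c)²`.
-/

open RealInnerProductSpace

theorem sq_div_add_sq_div_add_sq_div_lt_half {a b c : ℝ}
    (h : a ^ 2 + b ^ 2 + c ^ 2 < 2 * (a * b + b * c + c * a)) :
    (a / (a + b + c)) ^ 2 + (b / (a + b + c)) ^ 2 + (c / (a + b + c)) ^ 2 < 1 / 2 := by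
  have hs : 2 * (a ^ 2 + b ^ 2 + c ^ 2) < (a + b + c) ^ 2 := by linear_combination h
  rw [div_pow, div_pow, div_pow, ← add_div, ← add_div,
    div_lt_iff₀ (lt_of_le_of_lt (by positivity) hs)]
  linarith

section
variable {F : Type*} [NormedAddCommGroup F] [InnerProductSpace ℝ F]

theorem real_inner_sq_lt_of_linearIndependent {x y : F} (h : LinearIndependent ℝ ![x, y]) :
    ⟪x, y⟫ ^ 2 < ‖x‖ ^ 2 * ‖y‖ ^ 2 := by
  have hdet := (Matrix.posDef_gram_of_linearIndependent h).det_pos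
  simp only [Matrix.det_fin_two, Matrix.gram, Matrix.of_apply, Matrix.cons_val_zero,
    Matrix.cons_val_one, Matrix.cons_val_fin_one, real_inner_self_eq_norm_sq,
    real_inner_comm x y] at hdet
  linear_combination hdet

theorem sq_add_sq_add_sq_norm_sq_lt_of_linearIndependent {x y : F}
    (h : LinearIndependent ℝ ![x, y]) :
    (‖x‖ ^ 2) ^ 2 + (‖y‖ ^ 2) ^ 2 + (‖x + y‖ ^ 2) ^ 2 <
      2 * (‖x‖ ^ 2 * ‖y‖ ^ 2 + ‖y‖ ^ 2 * ‖x + y‖ ^ 2 + ‖x + y‖ ^ 2 * ‖x‖ ^ 2) := by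
  rw [norm_add_sq_real]
  linear_combination 4 * real_inner_sq_lt_of_linearIndependent h

end

theorem stmt4_general {E : Type*} [NormedAddCommGroup E] [InnerProductSpace ℝ E]
    (z₁ z₂ z₃ : E)
    (h : z₁ + z₂ + z₃ = 0)
    (hind : LinearIndependent ℝ ![z₁, z₂])
    (b : Fin 3 → ℝ)
    (hb : ∀ j, b j = ‖![z₁, z₂, z₃] j‖ ^ 2 / (‖z₁‖ ^ 2 + ‖z₂‖ ^ 2 + ‖z₃‖ ^ 2)) :
    b 0 ^ 2 + b 1 ^ 2 + b 2 ^ 2 < 1 / 2 := by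
  have hz₃ : ‖z₃‖ = ‖z₁ + z₂‖ := by
    rw [← neg_eq_of_add_eq_zero_right h, norm_neg]
  simp only [hb, Matrix.cons_val_zero, Matrix.cons_val_one, Matrix.cons_val_two,
    Matrix.head_cons, Matrix.tail_cons, hz₃]
  exact sq_div_add_sq_div_add_sq_div_lt_half
    (sq_add_sq_add_sq_norm_sq_lt_of_linearIndependent hind)

theorem stmt4 {E : Type*} [NormedAddCommGroup E] [InnerProductSpace ℝ E]
    (z₁ z₂ z₃ : E) (h1 : z₁ ≠ 0) (h2 : z₂ ≠ 0) (h3 : z₃ ≠ 0)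
    (h : z₁ + z₂ + z₃ = 0)
    (hind : LinearIndependent ℝ ![z₁, z₂])
    (b : Fin 3 → ℝ)
    (hb : ∀ j, b j = ‖![z₁, z₂, z₃] j‖ ^ 2 / (‖z₁‖ ^ 2 + ‖z₂‖ ^ 2 + ‖z₃‖ ^ 2)) :
    b 0 ^ 2 + b 1 ^ 2 + b 2 ^ 2 < 1 / 2 :=
  stmt4_general z₁ z₂ z₃ h hind b hb
end
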